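/- Define ρ(M, n) = √2/(M·sin((π/(2M))·n)). For all integers M ≥ 4 and n with 3 ≤ n ≤ M−1: ρ(M, n) > ρ(M+1, n), ρ(M, n) > ρ(M, n+1) whenever n+1 ≤ M−1, and ρ(M, n) ≤ ρ(4, 3) = √2/(4·sin(3π/8)) < 2/5. -/

import Mathlib

open Real Set

/-- `ρ(M, n) = √2/(M·sin((π/(2M))·n))`. -/
noncomputable def rho (M n : ℕ) : ℝ :=
  Real.sqrt 2 / (M * Real.sin (Real.pi / (2 * M) * n))

/-! Both monotonicity statements come down to the denominator `M · sin(πn/(2M))`. In `n` it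
grows because `sin` increases on `[0, π/2]`. In `M` it grows because `x ↦ x · sin(c/x)` is
increasing for `c/x ≤ π`, which is the strict concavity of `sin` on `[0, π]`: the chord from
`0` lies below the graph, i.e. `t · sin a < sin (t · a)` for `0 < t < 1`. -/

lemma Real.mul_sin_lt_sin_mul {a t : ℝ} (ha : 0 < a) (ha' : a ≤ π) (ht : 0 < t) (ht' : t < 1) :
    t * sin a < sin (t * a) := by
  simpa using strictConcaveOn_sin_Icc.2 (left_mem_Icc.2 pi_pos.le) ⟨ha.le, ha'⟩ ha.ne
    (sub_pos.2 ht') ht (sub_add_cancel 1 t)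

lemma Real.strictMonoOn_mul_sin_div {c : ℝ} (hc : 0 < c) :
    StrictMonoOn (fun x => x * sin (c / x)) (Ici (c / π)) := by
  intro x (hx : c / π ≤ x) y _ hxy
  have hx0 : 0 < x := (div_pos hc pi_pos).trans_le hx
  have hy0 : 0 < y := hx0.trans hxy
  have hcx : c / x ≤ π := (div_le_iff₀ hx0).2 (by rwa [div_le_iff₀' pi_pos] at hx)
  have key := mul_sin_lt_sin_mul (div_pos hc hx0) hcx (div_pos hx0 hy0)
    ((div_lt_one hy0).2 hxy)
  calc x * sin (c / x) = y * (x / y * sin (c / x)) := by field_simp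
    _ < y * sin (x / y * (c / x)) := mul_lt_mul_of_pos_left key hy0
    _ = y * sin (c / y) := by field_simp

lemma rho_eq (M n : ℕ) : rho M n = √2 / (M * sin (π * n / 2 / M)) := by
  unfold rho
  ring_nf

lemma sin_pi_mul_div_pos {M n : ℕ} (hn : 0 < n) (hnM : n < 2 * M) :
    0 < sin (π * n / 2 / M) := by
  have hM : (0 : ℝ) < M := by exact_mod_cast (show 0 < M by omega)
  have hnM' : (n : ℝ) < 2 * M := by exact_mod_cast hnM
  apply sin_pos_of_pos_of_lt_pi (by positivity)
  rw [div_lt_iff₀ hM, div_lt_iff₀ two_pos]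
  nlinarith [pi_pos]

lemma strictAntiOn_rho_left {n : ℕ} (hn : 0 < n) :
    StrictAntiOn (rho · n) {M | n < 2 * M} := by
  intro M hM M' hM' hMM'
  have hpos : (0 : ℝ) < M := by exact_mod_cast (show 0 < M by simp at hM; omega)
  have hden : 0 < (M : ℝ) * sin (π * n / 2 / M) := mul_pos hpos (sin_pi_mul_div_pos hn hM)
  have hcM : π * n / 2 / π ≤ M := by
    rw [mul_div_assoc, mul_div_cancel_left₀ _ pi_ne_zero, div_le_iff₀ two_pos]
    exact_mod_cast (show n ≤ M * 2 by simp at hM; omega)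
  simp only [rho_eq]
  refine div_lt_div_of_pos_left (by positivity) hden ?_
  exact strictMonoOn_mul_sin_div (by positivity) hcM (hcM.trans (by exact_mod_cast hMM'.le))
    (by exact_mod_cast hMM')

lemma strictAntiOn_rho_right (M : ℕ) : StrictAntiOn (rho M) (Icc 1 M) := by
  intro m ⟨hm, hmM⟩ n ⟨_, hnM⟩ hmn
  have hpos : (0 : ℝ) < M := by exact_mod_cast (show 0 < M by omega)
  have harg {k : ℕ} (hk : k ≤ M) : π * k / 2 / M ≤ π / 2 := by
    rw [div_le_iff₀ hpos, div_mul_eq_mul_div, div_le_div_iff_of_pos_right two_pos]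
    exact mul_le_mul_of_nonneg_left (by exact_mod_cast hk) pi_pos.le
  have hsin : sin (π * m / 2 / M) < sin (π * n / 2 / M) := by
    have : 0 ≤ π * m / 2 / M := by positivity
    apply sin_lt_sin_of_lt_of_le_pi_div_two (by linarith [pi_pos]) (harg hnM)
    gcongr
  simp only [rho_eq]
  exact div_lt_div_of_pos_left (by positivity)
    (mul_pos hpos (sin_pi_mul_div_pos hm (by omega))) (mul_lt_mul_of_pos_left hsin hpos)

lemma sin_three_pi_div_eight : sin (3 * π / 8) = √(2 + √2) / 2 := by
  rw [show 3 * π / 8 = π / 2 - π / 8 by ring, sin_pi_div_two_sub, cos_pi_div_eight]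

lemma rho_four_three : rho 4 3 = √2 / (4 * sin (3 * π / 8)) := by
  unfold rho
  norm_num
  ring_nf

lemma rho_four_three_lt : rho 4 3 < 2 / 5 := by
  rw [rho_four_three, sin_three_pi_div_eight]
  have hs2 : √2 ^ 2 = 2 := sq_sqrt (by norm_num)
  have hu2 : √(2 + √2) ^ 2 = 2 + √2 := sq_sqrt (by positivity)
  have hs : 9 / 8 < √2 := by nlinarith [sqrt_nonneg 2]
  have key : 5 * √2 < 4 * √(2 + √2) :=
    lt_of_pow_lt_pow_left₀ 2 (by positivity) (by nlinarith)
  rw [div_lt_div_iff₀ (by positivity) (by norm_num)]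
  linarith

/-- Equations (35)–(36) of Appendix D: monotonicity in `M` and in `n` of
`ρ(M,n)`, and the bound `ρ(M,n) ≤ ρ(4,3) = √2/(4·sin(3π/8)) < 2/5`. -/
theorem rho_monotone_bounds (M n : ℕ) (hM : 4 ≤ M) (hn : 3 ≤ n) (hn' : n ≤ M - 1) :
    rho M n > rho (M + 1) n ∧
    (n + 1 ≤ M - 1 → rho M n > rho M (n + 1)) ∧
    rho M n ≤ rho 4 3 ∧
    rho 4 3 = Real.sqrt 2 / (4 * Real.sin (3 * Real.pi / 8)) ∧
    rho 4 3 < 2 / 5 := by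
  have hnM : n < 2 * M := by omega
  refine ⟨?_, fun h => ?_, ?_, rho_four_three, rho_four_three_lt⟩
  · exact strictAntiOn_rho_left (by omega) hnM (show n < 2 * (M + 1) by omega) (lt_add_one M)
  · exact strictAntiOn_rho_right M ⟨by omega, by omega⟩ ⟨by omega, by omega⟩ (lt_add_one n)
  · calc rho M n ≤ rho M 3 :=
          (strictAntiOn_rho_right M).antitoneOn ⟨by omega, by omega⟩ ⟨by omega, by omega⟩ hn
      _ ≤ rho 4 3 :=
          (strictAntiOn_rho_left (by norm_num)).antitoneOn (show 3 < 2 * 4 by norm_num)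
            (show 3 < 2 * M by omega) hM
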